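/- The double integral I = ∫_0^{2π}∫_0^{2π} F(x,y) dx dy, where F(x,y) = ((1 - x/π)e^{ix/2} - (1 - y/π)e^{iy/2})^2 (e^{ix} + e^{iy}) / (e^{ix} - e^{iy})^2, is a real number (its imaginary part is 0). -/
import Mathlib

open Complex Real

lemma iconj (f : ℝ → ℂ) (a b : ℝ) :
    ∫ x in a..b, (starRingEnd ℂ) (f x) = (starRingEnd ℂ) (∫ x in a..b, f x) := by
  simp [intervalIntegral, ← integral_conj]

lemma term_conj (x : ℝ) :
    (starRingEnd ℂ) (((1 - x / Real.pi : ℝ) : ℂ) * Complex.exp (Complex.I * x / 2))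
      = ((1 - (2 * Real.pi - x) / Real.pi : ℝ) : ℂ)
        * Complex.exp (Complex.I * (2 * Real.pi - x) / 2) := by
  have hπ : (Real.pi : ℂ) ≠ 0 := Complex.ofReal_ne_zero.mpr Real.pi_ne_zero
  rw [map_mul, Complex.conj_ofReal, ← Complex.exp_conj]
  have h1 : ((1 - (2 * Real.pi - x) / Real.pi : ℝ) : ℂ) = -((1 - x / Real.pi : ℝ) : ℂ) := by
    push_cast
    field_simp
    ring
  have h2 : Complex.exp (Complex.I * ((2 * Real.pi - x : ℝ) : ℂ) / 2)
      = -Complex.exp ((starRingEnd ℂ) (Complex.I * x / 2)) := by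
    have h3 : Complex.I * ((2 * Real.pi - x : ℝ) : ℂ) / 2
        = (Real.pi : ℂ) * Complex.I + (starRingEnd ℂ) (Complex.I * x / 2) := by
      simp only [map_div₀, map_mul, Complex.conj_ofReal, Complex.conj_I, map_ofNat]
      push_cast
      ring
    rw [h3, Complex.exp_add, Complex.exp_pi_mul_I]
    ring
  rw [h1]
  push_cast at h2 ⊢
  rw [h2]
  ring

lemma exp_conj' (x : ℝ) :
    (starRingEnd ℂ) (Complex.exp (Complex.I * x))
      = Complex.exp (Complex.I * ((2 * Real.pi - x : ℝ) : ℂ)) := by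
  rw [← Complex.exp_conj]
  have h3 : Complex.I * ((2 * Real.pi - x : ℝ) : ℂ)
      = 2 * Real.pi * Complex.I + (starRingEnd ℂ) (Complex.I * x) := by
    simp only [map_mul, Complex.conj_ofReal, Complex.conj_I]
    push_cast
    ring
  rw [h3, Complex.exp_add, Complex.exp_two_pi_mul_I, one_mul]

theorem stmt13 (F : ℝ → ℝ → ℂ)
    (hF : ∀ x y : ℝ, F x y =
      (((1 - x / Real.pi : ℝ) : ℂ) * Complex.exp (Complex.I * x / 2)
        - ((1 - y / Real.pi : ℝ) : ℂ) * Complex.exp (Complex.I * y / 2)) ^ 2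
      * (Complex.exp (Complex.I * x) + Complex.exp (Complex.I * y))
      / (Complex.exp (Complex.I * x) - Complex.exp (Complex.I * y)) ^ 2)
    (I : ℂ)
    (hI : I = ∫ x in (0 : ℝ)..(2 * Real.pi), ∫ y in (0 : ℝ)..(2 * Real.pi), F x y) :
    I.im = 0 := by
  have key : ∀ x y : ℝ, (starRingEnd ℂ) (F x y) = F (2 * Real.pi - x) (2 * Real.pi - y) := by
    intro x y
    rw [hF, hF, map_div₀, map_mul, map_pow, map_sub, map_pow, map_add, map_sub,
      term_conj, term_conj, exp_conj' x, exp_conj' y]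
    push_cast
    ring
  have hconj : (starRingEnd ℂ) I = I := by
    conv_lhs => rw [hI]
    rw [← iconj]
    simp_rw [← iconj, key]
    have inner : ∀ x : ℝ, (∫ y in (0:ℝ)..(2*Real.pi), F (2*Real.pi - x) (2*Real.pi - y))
        = ∫ y in (0:ℝ)..(2*Real.pi), F (2*Real.pi - x) y := by
      intro x
      rw [intervalIntegral.integral_comp_sub_left (F (2*Real.pi - x)) (2*Real.pi)]
      norm_num
    simp_rw [inner]
    rw [intervalIntegral.integral_comp_sub_left
      (fun x => ∫ y in (0:ℝ)..(2*Real.pi), F x y) (2*Real.pi)]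
    norm_num
    exact hI.symm
  exact Complex.conj_eq_iff_im.mp hconj
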